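/- Let c be a positive integer, 1 ≤ d ≤ c, m = gcd(c,d) and c' = c/m, d' = d/m. If A ⊆ ZMod c is a maximally even set of cardinality d, then its image A' under the natural reduction map ZMod c → ZMod c' (well defined since c' ∣ c) is a maximally even subset of ZMod c' of cardinality d', and A is the full preimage of A' under this reduction map. -/

import Mathlib

/-- The discrete Fourier transform of a finite subset `A` of `ZMod n`:
`F_A(t) = ∑_{k ∈ A} exp(-2πi·(k.val)·(t.val)/n)`. -/
noncomputable def fourierTransform (n : ℕ) (A : Finset (ZMod n)) (t : ZMod n) : ℂ :=
  ∑ k ∈ A, Complex.exp (-2 * Real.pi * Complex.I * ((k.val : ℂ) * (t.val : ℂ)) / n)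

/-- `A ⊆ ZMod n` is maximally even of cardinality `d` if `A` has cardinality `d` and
`|F_A(d)| ≥ |F_B(d)|` for every subset `B` of cardinality `d`. -/
def MaximallyEven (n d : ℕ) (A : Finset (ZMod n)) : Prop :=
  A.card = d ∧ ∀ B : Finset (ZMod n), B.card = d →
    ‖fourierTransform n B (d : ZMod n)‖ ≤
      ‖fourierTransform n A (d : ZMod n)‖


open Finset

noncomputable def zk (n t : ℕ) (r : ZMod n) : ℂ :=
  Complex.exp (-2 * Real.pi * Complex.I * ((r.val : ℂ) * (t : ℂ)) / (n : ℂ))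

lemma castHom_val' {n m : ℕ} [NeZero n] [NeZero m] (h : m ∣ n) (a : ZMod n) :
    (ZMod.castHom h (ZMod m) a).val = a.val % m := by
  rw [ZMod.castHom_apply, ← ZMod.natCast_val, ZMod.val_natCast]

lemma zk_lift {c c' d d' : ℕ} [NeZero c] [NeZero c'] (h : c' ∣ c)
    (hdd : d * c' = d' * c) (k : ZMod c) :
    zk c d k = zk c' d' (ZMod.castHom h (ZMod c') k) := by
  have hc0 : (c : ℂ) ≠ 0 := Nat.cast_ne_zero.2 (NeZero.ne c)
  have hc'0 : (c' : ℂ) ≠ 0 := Nat.cast_ne_zero.2 (NeZero.ne c')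
  set q : ℕ := k.val / c' with hq
  have hkv : (k.val : ℂ) = (c' : ℂ) * q + ((k.val % c' : ℕ) : ℂ) := by
    conv_lhs => rw [← Nat.div_add_mod k.val c']
    push_cast
    ring
  rw [zk, zk, castHom_val' h]
  have hdd' : (d : ℂ) * (c' : ℂ) = (d' : ℂ) * (c : ℂ) := by exact_mod_cast congrArg (Nat.cast : ℕ → ℂ) hdd
  have e1 : -2 * Real.pi * Complex.I * ((k.val : ℂ) * (d : ℂ)) / (c : ℂ)
      = -2 * Real.pi * Complex.I * ((k.val : ℂ) * (d' : ℂ)) / (c' : ℂ) := by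
    rw [div_eq_div_iff hc0 hc'0]
    linear_combination (-2 * Real.pi * Complex.I * (k.val : ℂ)) * hdd'
  have e2 : -2 * Real.pi * Complex.I * ((k.val : ℂ) * (d' : ℂ)) / (c' : ℂ)
      = ((-(q * d') : ℤ) : ℂ) * (2 * Real.pi * Complex.I)
        + -2 * Real.pi * Complex.I * (((k.val % c' : ℕ) : ℂ) * (d' : ℂ)) / (c' : ℂ) := by
    have h2 : ((-(q * d') : ℤ) : ℂ) = -((q : ℂ) * (d' : ℂ)) := by push_cast; ring
    rw [h2, hkv]
    field_simp
    ring
  rw [e1, e2, Complex.exp_add, Complex.exp_int_mul_two_pi_mul_I, one_mul]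

lemma zk_inj {n t : ℕ} [NeZero n] (hcop : Nat.Coprime n t) {r₁ r₂ : ZMod n}
    (h : zk n t r₁ = zk n t r₂) : r₁ = r₂ := by
  have hn0 : 0 < n := Nat.pos_of_ne_zero (NeZero.ne n)
  set ζ : ℂ := Complex.exp (-2 * Real.pi * Complex.I / n) with hζ
  have hzk : ∀ r : ZMod n, zk n t r = ζ ^ (r.val * t) := by
    intro r
    rw [zk, hζ, ← Complex.exp_nat_mul]
    congr 1
    push_cast
    ring
  have hζprim : IsPrimitiveRoot ζ n := by
    have h1 := Complex.isPrimitiveRoot_exp n hn0.ne'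
    have h2 : ζ = (Complex.exp (2 * Real.pi * Complex.I / n))⁻¹ := by
      rw [hζ, ← Complex.exp_neg]; congr 1; ring
    rw [h2]
    exact h1.inv
  have hζ0 : ζ ≠ 0 := Complex.exp_ne_zero _
  rw [hzk, hzk] at h
  have key : ∀ s₁ s₂ : ZMod n, ζ ^ (s₁.val * t) = ζ ^ (s₂.val * t) → s₂.val ≤ s₁.val → s₁ = s₂ := by
    intro s₁ s₂ heq hle
    have h1 : ζ ^ (s₂.val * t) * ζ ^ ((s₁.val - s₂.val) * t) = ζ ^ (s₂.val * t) * 1 := by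
      rw [mul_one, ← pow_add, ← Nat.add_mul, Nat.add_sub_cancel' hle, heq]
    have h2 : ζ ^ ((s₁.val - s₂.val) * t) = 1 := mul_left_cancel₀ (pow_ne_zero _ hζ0) h1
    have h3 : n ∣ (s₁.val - s₂.val) * t := hζprim.dvd_of_pow_eq_one _ h2
    have h4 : n ∣ s₁.val - s₂.val := Nat.Coprime.dvd_of_dvd_mul_right hcop h3
    have h5 : s₁.val - s₂.val < n := lt_of_le_of_lt (Nat.sub_le _ _) s₁.val_lt
    have h6 : s₁.val - s₂.val = 0 := Nat.eq_zero_of_dvd_of_lt h4 h5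
    exact ZMod.val_injective n (le_antisymm (Nat.sub_eq_zero_iff_le.1 h6) hle)
  rcases le_total r₂.val r₁.val with hle | hle
  · exact key r₁ r₂ h hle
  · exact (key r₂ r₁ h.symm hle).symm

lemma parallelogram_max {F w : ℂ} (h1 : ‖F + w‖ ≤ ‖F‖)
    (h2 : ‖F - w‖ ≤ ‖F‖) : w = 0 := by
  have e : Complex.normSq (F + w) + Complex.normSq (F - w)
      = 2 * Complex.normSq F + 2 * Complex.normSq w := by
    simp only [Complex.normSq_apply, Complex.add_re, Complex.add_im, Complex.sub_re,
      Complex.sub_im]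
    ring
  have n1 : Complex.normSq (F + w) ≤ Complex.normSq F := by
    rw [← Complex.sq_norm, ← Complex.sq_norm F]
    exact pow_le_pow_left₀ (norm_nonneg _) h1 2
  have n2 : Complex.normSq (F - w) ≤ Complex.normSq F := by
    rw [← Complex.sq_norm, ← Complex.sq_norm F]
    exact pow_le_pow_left₀ (norm_nonneg _) h2 2
  have hw : Complex.normSq w ≤ 0 := by linarith
  exact Complex.normSq_eq_zero.1 (le_antisymm hw (Complex.normSq_nonneg w))



lemma fiber_card {c c' m : ℕ} [NeZero c] [NeZero c'] (h : c' ∣ c) (hc : c = m * c')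
    (r : ZMod c') :
    (univ.filter (fun k : ZMod c => ZMod.castHom h (ZMod c') k = r)).card = m := by
  have hc'0 : 0 < c' := Nat.pos_of_ne_zero (NeZero.ne c')
  have hm0 : 0 < m := by
    rcases Nat.eq_zero_or_pos m with h0 | h0
    · rw [h0, zero_mul] at hc; exact absurd hc (NeZero.ne c)
    · exact h0
  apply Finset.card_eq_of_bijective (fun j _ => ((r.val + c' * j : ℕ) : ZMod c))
  · -- surjective
    intro k hk
    rw [mem_filter] at hk
    have hkr : k.val % c' = r.val := by
      have := congrArg ZMod.val hk.2
      rwa [castHom_val' h] at this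
    have hjlt : k.val / c' < m := by
      have hce : c = c' * m := by rw [hc]; exact Nat.mul_comm _ _
      have hlt : k.val < c' * m := hce ▸ k.val_lt
      exact Nat.div_lt_of_lt_mul hlt
    refine ⟨k.val / c', hjlt, ?_⟩
    show ((r.val + c' * (k.val / c') : ℕ) : ZMod c) = k
    have hval : r.val + c' * (k.val / c') = k.val := by
      rw [← hkr]; exact Nat.mod_add_div _ _
    rw [hval, ZMod.natCast_val, ZMod.cast_id]
  · -- maps into
    intro j hj
    rw [mem_filter]
    refine ⟨mem_univ _, ?_⟩
    rw [map_natCast]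
    push_cast
    rw [ZMod.natCast_self, zero_mul, add_zero, ZMod.natCast_val, ZMod.cast_id]
  · -- injective
    intro j₁ j₂ hj₁ hj₂ heq
    have hlt : ∀ j, j < m → r.val + c' * j < c := by
      intro j hj
      have h1 : r.val < c' := r.val_lt
      have h2 : c' * j + c' ≤ c' * m := by
        calc c' * j + c' = c' * (j + 1) := by ring
        _ ≤ c' * m := Nat.mul_le_mul_left _ (by omega)
      have h3 : c' * m = m * c' := Nat.mul_comm _ _
      omega
    have hv := congrArg ZMod.val heq
    rw [ZMod.val_natCast, ZMod.val_natCast, Nat.mod_eq_of_lt (hlt _ hj₁),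
      Nat.mod_eq_of_lt (hlt _ hj₂)] at hv
    have : c' * j₁ = c' * j₂ := by omega
    exact Nat.eq_of_mul_eq_mul_left hc'0 this

lemma fourier_eq_sum_zk (n t : ℕ) [NeZero n] (ht : t < n) (B : Finset (ZMod n)) :
    fourierTransform n B ((t : ℕ) : ZMod n) = ∑ k ∈ B, zk n t k := by
  simp only [fourierTransform, zk, ZMod.val_natCast, Nat.mod_eq_of_lt ht]

lemma fourier_fiber {c c' d d' : ℕ} [NeZero c] [NeZero c'] (h : c' ∣ c)
    (hdd : d * c' = d' * c) (hd : d < c) (B : Finset (ZMod c)) :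
    fourierTransform c B ((d : ℕ) : ZMod c)
      = ∑ r : ZMod c',
          ((B.filter (fun k => ZMod.castHom h (ZMod c') k = r)).card : ℂ) * zk c' d' r := by
  rw [fourier_eq_sum_zk c d hd B]
  have e1 : ∑ k ∈ B, zk c d k = ∑ k ∈ B, zk c' d' (ZMod.castHom h (ZMod c') k) :=
    Finset.sum_congr rfl (fun k _ => zk_lift h hdd k)
  rw [e1, ← Finset.sum_fiberwise B (fun k => ZMod.castHom h (ZMod c') k)
    (fun k => zk c' d' (ZMod.castHom h (ZMod c') k))]
  refine Finset.sum_congr rfl (fun r _ => ?_)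
  rw [show ∑ k ∈ B.filter (fun k => ZMod.castHom h (ZMod c') k = r),
        zk c' d' (ZMod.castHom h (ZMod c') k)
      = ∑ _k ∈ B.filter (fun k => ZMod.castHom h (ZMod c') k = r), zk c' d' r from
    Finset.sum_congr rfl (fun k hk => by rw [(Finset.mem_filter.1 hk).2])]
  rw [Finset.sum_const, nsmul_eq_mul]


/-- Let `m = gcd(c,d)`, `c' = c/m`, `d' = d/m`. The image of a maximally even set
`A ⊆ ZMod c` of cardinality `d` under the reduction `ZMod c → ZMod c'` is a maximally
even subset of `ZMod c'` of cardinality `d'`, and `A` is its full preimage. -/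
theorem maximallyEven_reduction (c d : ℕ) [NeZero c] (hd1 : 1 ≤ d) (hdc : d ≤ c)
    (A : Finset (ZMod c)) (hA : MaximallyEven c d A) :
    MaximallyEven (c / Nat.gcd c d) (d / Nat.gcd c d)
      (A.image (ZMod.castHom (Nat.div_dvd_of_dvd (Nat.gcd_dvd_left c d))
        (ZMod (c / Nat.gcd c d)))) ∧
    ∀ a : ZMod c,
      a ∈ A ↔ ZMod.castHom (Nat.div_dvd_of_dvd (Nat.gcd_dvd_left c d))
          (ZMod (c / Nat.gcd c d)) a ∈
        A.image (ZMod.castHom (Nat.div_dvd_of_dvd (Nat.gcd_dvd_left c d))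
          (ZMod (c / Nat.gcd c d))) := by
  classical
  obtain ⟨hcard, hmax⟩ := hA
  set m := Nat.gcd c d with hm
  set c' := c / m with hc'def
  set d' := d / m with hd'def
  have hcpos : 0 < c := Nat.pos_of_ne_zero (NeZero.ne c)
  have hm0 : 0 < m := Nat.gcd_pos_of_pos_left _ hcpos
  have hmc : m ∣ c := Nat.gcd_dvd_left c d
  have hmd : m ∣ d := Nat.gcd_dvd_right c d
  have hc : c = m * c' := (Nat.mul_div_cancel' hmc).symm
  have hd : d = m * d' := (Nat.mul_div_cancel' hmd).symm
  have hc'0 : 0 < c' := Nat.div_pos (Nat.le_of_dvd hcpos hmc) hm0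
  have hd'0 : 0 < d' := Nat.div_pos (Nat.le_of_dvd hd1 hmd) hm0
  haveI : NeZero c' := ⟨hc'0.ne'⟩
  have hcop : Nat.Coprime c' d' := Nat.coprime_div_gcd_div_gcd hm0
  have hdvd : c' ∣ c := Nat.div_dvd_of_dvd hmc
  set φ := ZMod.castHom (Nat.div_dvd_of_dvd (Nat.gcd_dvd_left c d)) (ZMod c') with hφ
  by_cases hc'1 : c' = 1
  · -- degenerate case : c' = 1, so m = c, d = c, d' = 1
    have hmceq : m = c := by rw [hc, hc'1, mul_one]
    have hcd : c ∣ d := hmceq ▸ hmd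
    have hdceq : d = c := Nat.le_antisymm hdc (Nat.le_of_dvd hd1 hcd)
    have hd'1 : d' = 1 := by
      have h1 : m * d' = m * 1 := by rw [mul_one, ← hd, hdceq]; exact hmceq.symm
      exact Nat.eq_of_mul_eq_mul_left hm0 h1
    have hcardZ : Fintype.card (ZMod c') = 1 := by rw [ZMod.card, hc'1]
    have hAuniv : A = univ := by
      apply Finset.eq_univ_of_card
      rw [hcard, ZMod.card, hdceq]
    have himcard1 : (A.image φ).card = 1 := by
      apply Nat.le_antisymm
      · calc (A.image φ).card ≤ Fintype.card (ZMod c') := Finset.card_le_univ _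
          _ = 1 := hcardZ
      · exact Finset.card_pos.2 (Finset.image_nonempty.2 (Finset.card_pos.1 (by omega)))
    have himuniv : A.image φ = univ :=
      Finset.eq_univ_of_card _ (by rw [himcard1, hcardZ])
    refine ⟨⟨?_, ?_⟩, ?_⟩
    · rw [himcard1, hd'1]
    · intro B hB
      have hBuniv : B = univ := Finset.eq_univ_of_card B (by rw [hB, hcardZ, hd'1])
      rw [hBuniv, himuniv]
    · intro a
      constructor
      · intro ha; exact Finset.mem_image_of_mem φ ha
      · intro _; rw [hAuniv]; exact mem_univ a
  · -- main case
    have hd'c' : d' < c' := by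
      have hle : d' ≤ c' := Nat.div_le_div_right hdc
      rcases lt_or_eq_of_le hle with hlt | heq
      · exact hlt
      · exfalso
        apply hc'1
        have hcop2 := hcop
        rw [heq] at hcop2
        rwa [Nat.Coprime, Nat.gcd_self] at hcop2
    have hdc2 : d < c := by
      rw [hc, hd]
      exact Nat.mul_lt_mul_of_pos_left hd'c' hm0
    have hddc : d * c' = d' * c := by rw [hc, hd]; ring
    set ncnt : Finset (ZMod c) → ZMod c' → ℕ :=
      fun B r => (B.filter (fun k => φ k = r)).card with hncnt
    have hfib : ∀ r, (univ.filter (fun k : ZMod c => φ k = r)).card = m :=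
      fiber_card hdvd hc
    have hnle : ∀ B r, ncnt B r ≤ m := fun B r =>
      hfib r ▸ Finset.card_le_card (Finset.filter_subset_filter _ (Finset.subset_univ B))
    have hFB : ∀ B : Finset (ZMod c), fourierTransform c B ((d : ℕ) : ZMod c)
        = ∑ r : ZMod c', (ncnt B r : ℂ) * zk c' d' r :=
      fun B => fourier_fiber hdvd hddc hdc2 B
    have hcardB : ∀ B : Finset (ZMod c), B.card = ∑ r : ZMod c', ncnt B r := fun B =>
      Finset.card_eq_sum_card_fiberwise (fun x _ => mem_univ (φ x))
    -- Step A : all fiber counts of A are 0 or m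
    have hkey : ∀ r, ncnt A r = 0 ∨ ncnt A r = m := by
      by_contra hcon
      push_neg at hcon
      obtain ⟨r₁, hr₁0, hr₁m⟩ := hcon
      have hr₂ : ∃ r₂, r₂ ≠ r₁ ∧ ncnt A r₂ ≠ 0 ∧ ncnt A r₂ ≠ m := by
        by_contra hcon2
        push_neg at hcon2
        have hdvdsum : m ∣ ∑ r ∈ univ.erase r₁, ncnt A r := by
          apply Finset.dvd_sum
          intro r hr
          rcases eq_or_ne (ncnt A r) 0 with h0 | h0
          · rw [h0]; exact dvd_zero m
          · rw [hcon2 r (Finset.ne_of_mem_erase hr) h0]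
        have hsplit : ncnt A r₁ + ∑ r ∈ univ.erase r₁, ncnt A r = d := by
          rw [Finset.add_sum_erase univ (ncnt A) (mem_univ r₁), ← hcardB A, hcard]
        have hdvd1 : m ∣ ncnt A r₁ := by
          have h1 : m ∣ ncnt A r₁ + ∑ r ∈ univ.erase r₁, ncnt A r := hsplit ▸ hmd
          have := Nat.dvd_sub h1 hdvdsum
          simpa using this
        have hle := Nat.le_of_dvd (Nat.pos_of_ne_zero hr₁0) hdvd1
        exact hr₁m (Nat.le_antisymm (hnle A r₁) hle)
      obtain ⟨r₂, hne, hr₂0, hr₂m⟩ := hr₂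
      have hx : ∀ r, ncnt A r ≠ m → ∃ x, φ x = r ∧ x ∉ A := by
        intro r hr
        have hlt : (A.filter (fun k => φ k = r)).card
            < (univ.filter (fun k => φ k = r)).card := by
          rw [hfib r]
          exact lt_of_le_of_ne (hnle A r) hr
        have hex : ∃ e ∈ univ.filter (fun k => φ k = r),
            e ∉ A.filter (fun k => φ k = r) := by
          by_contra hcc
          push_neg at hcc
          exact absurd (Finset.card_le_card hcc) (not_le.2 hlt)
        obtain ⟨x, hx1, hx2⟩ := hex
        refine ⟨x, (Finset.mem_filter.1 hx1).2, fun hxA =>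
          hx2 (Finset.mem_filter.2 ⟨hxA, (Finset.mem_filter.1 hx1).2⟩)⟩
      have hy : ∀ r, ncnt A r ≠ 0 → ∃ y, y ∈ A ∧ φ y = r := by
        intro r hr
        obtain ⟨y, hy⟩ := Finset.card_pos.1 (Nat.pos_of_ne_zero hr)
        exact ⟨y, (Finset.mem_filter.1 hy).1, (Finset.mem_filter.1 hy).2⟩
      obtain ⟨x₁, hx₁r, hx₁A⟩ := hx r₁ hr₁m
      obtain ⟨y₂, hy₂A, hy₂r⟩ := hy r₂ hr₂0
      obtain ⟨x₂, hx₂r, hx₂A⟩ := hx r₂ hr₂m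
      obtain ⟨y₁, hy₁A, hy₁r⟩ := hy r₁ hr₁0
      have hmod : ∀ x y : ZMod c, x ∉ A → y ∈ A →
          (insert x (A.erase y)).card = d ∧
          fourierTransform c (insert x (A.erase y)) ((d : ℕ) : ZMod c)
            = fourierTransform c A ((d : ℕ) : ZMod c)
              + zk c' d' (φ x) - zk c' d' (φ y) := by
        intro x y hxA hyA
        have hxe : x ∉ A.erase y := fun h => hxA (Finset.mem_of_mem_erase h)
        constructor
        · rw [Finset.card_insert_of_notMem hxe, Finset.card_erase_of_mem hyA, hcard]
          omega
        · rw [fourier_eq_sum_zk c d hdc2, fourier_eq_sum_zk c d hdc2,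
            Finset.sum_insert hxe, Finset.sum_erase_eq_sub hyA,
            zk_lift hdvd hddc x, zk_lift hdvd hddc y]
          ring
      set F := fourierTransform c A ((d : ℕ) : ZMod c) with hF
      set w := zk c' d' r₁ - zk c' d' r₂ with hw
      obtain ⟨hcardp, hFp⟩ := hmod x₁ y₂ hx₁A hy₂A
      obtain ⟨hcardn, hFn⟩ := hmod x₂ y₁ hx₂A hy₁A
      have hp := hmax _ hcardp
      have hn := hmax _ hcardn
      rw [hFp, hx₁r, hy₂r] at hp
      rw [hFn, hx₂r, hy₁r] at hn
      have ep : F + zk c' d' r₁ - zk c' d' r₂ = F + w := by rw [hw]; ring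
      have en : F + zk c' d' r₂ - zk c' d' r₁ = F - w := by rw [hw]; ring
      rw [ep] at hp
      rw [en] at hn
      have hw0 : w = 0 := parallelogram_max hp hn
      have hzz : zk c' d' r₁ = zk c' d' r₂ := by rwa [hw, sub_eq_zero] at hw0
      exact hne (zk_inj hcop hzz).symm
    -- membership in image iff positive count
    have him : ∀ r, r ∈ A.image φ ↔ ncnt A r ≠ 0 := by
      intro r
      rw [Finset.mem_image]
      constructor
      · rintro ⟨b, hb, rfl⟩
        have hbm : b ∈ A.filter (fun k => φ k = φ b) := Finset.mem_filter.2 ⟨hb, rfl⟩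
        exact (Finset.card_pos.2 ⟨b, hbm⟩).ne'
      · intro h
        obtain ⟨y, hy⟩ := Finset.card_pos.1 (Nat.pos_of_ne_zero h)
        exact ⟨y, (Finset.mem_filter.1 hy).1, (Finset.mem_filter.1 hy).2⟩
    -- A is the full preimage of its image
    have hfull : ∀ a : ZMod c, a ∈ A ↔ φ a ∈ A.image φ := by
      intro a
      constructor
      · exact fun ha => Finset.mem_image_of_mem φ ha
      · intro ha
        have hnm : ncnt A (φ a) = m := (hkey (φ a)).resolve_left ((him (φ a)).1 ha)
        have hsub : A.filter (fun k => φ k = φ a) = univ.filter (fun k => φ k = φ a) := by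
          apply Finset.eq_of_subset_of_card_le
            (Finset.filter_subset_filter _ (Finset.subset_univ A))
          rw [hfib]
          exact le_of_eq hnm.symm
        have hmm : a ∈ univ.filter (fun k => φ k = φ a) :=
          Finset.mem_filter.2 ⟨mem_univ a, rfl⟩
        rw [← hsub] at hmm
        exact (Finset.mem_filter.1 hmm).1
    -- cardinality of the image
    have himcard : (A.image φ).card = d' := by
      have h1 : m * d' = ∑ r ∈ A.image φ, ncnt A r := by
        rw [← hd, ← hcard, hcardB A]
        symm
        apply Finset.sum_subset (Finset.subset_univ _)
        intro r _ hr
        by_contra h0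
        exact hr ((him r).2 h0)
      have h2 : ∑ r ∈ A.image φ, ncnt A r = (A.image φ).card * m := by
        rw [Finset.sum_congr rfl
          (fun r hr => (hkey r).resolve_left ((him r).1 hr))]
        rw [Finset.sum_const, smul_eq_mul]
      have h3 : m * d' = m * (A.image φ).card := by rw [h1, h2]; ring
      exact (Nat.eq_of_mul_eq_mul_left hm0 h3).symm
    -- fourier transform of A in terms of its image
    have hFA : fourierTransform c A ((d : ℕ) : ZMod c)
        = (m : ℂ) * fourierTransform c' (A.image φ) ((d' : ℕ) : ZMod c') := by
      rw [hFB A, fourier_eq_sum_zk c' d' hd'c', Finset.mul_sum]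
      have hterm : ∀ r : ZMod c', (ncnt A r : ℂ) * zk c' d' r
          = if r ∈ A.image φ then (m : ℂ) * zk c' d' r else 0 := by
        intro r
        by_cases h : r ∈ A.image φ
        · rw [if_pos h, (hkey r).resolve_left ((him r).1 h)]
        · rw [if_neg h]
          have h0 : ncnt A r = 0 := by
            by_contra h0
            exact h ((him r).2 h0)
          rw [h0]
          simp
      rw [Finset.sum_congr rfl (fun r _ => hterm r), Finset.sum_ite_mem, univ_inter]
    refine ⟨⟨himcard, ?_⟩, hfull⟩
    intro S hS
    set BS := univ.filter (fun k : ZMod c => φ k ∈ S) with hBS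
    have hnBS : ∀ r, ncnt BS r = if r ∈ S then m else 0 := by
      intro r
      by_cases h : r ∈ S
      · rw [if_pos h, ← hfib r]
        show (BS.filter (fun k => φ k = r)).card = _
        congr 1
        rw [hBS, Finset.filter_filter]
        apply Finset.filter_congr
        intro k _
        constructor
        · intro hh; exact hh.2
        · intro hh; exact ⟨hh ▸ h, hh⟩
      · rw [if_neg h]
        rw [Finset.card_eq_zero, Finset.filter_eq_empty_iff]
        intro k hk
        intro hkr
        exact h (hkr ▸ (Finset.mem_filter.1 hk).2)
    have hBScard : BS.card = d := by
      rw [hcardB BS, Finset.sum_congr rfl (fun r _ => hnBS r),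
        Finset.sum_ite_mem, univ_inter, Finset.sum_const, smul_eq_mul, hS, hd]
      ring
    have hFBS : fourierTransform c BS ((d : ℕ) : ZMod c)
        = (m : ℂ) * fourierTransform c' S ((d' : ℕ) : ZMod c') := by
      rw [hFB BS, fourier_eq_sum_zk c' d' hd'c', Finset.mul_sum]
      have hterm : ∀ r : ZMod c', (ncnt BS r : ℂ) * zk c' d' r
          = if r ∈ S then (m : ℂ) * zk c' d' r else 0 := by
        intro r
        rw [hnBS r]
        by_cases h : r ∈ S
        · rw [if_pos h, if_pos h]
        · rw [if_neg h, if_neg h]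
          simp
      rw [Finset.sum_congr rfl (fun r _ => hterm r), Finset.sum_ite_mem, univ_inter]
    have hineq := hmax BS hBScard
    rw [hFBS, hFA, norm_mul, norm_mul] at hineq
    have hmabs : ‖((m : ℕ) : ℂ)‖ = (m : ℝ) := Complex.norm_natCast m
    rw [hmabs] at hineq
    have hmpos : (0 : ℝ) < m := by exact_mod_cast hm0
    exact le_of_mul_le_mul_left hineq hmpos
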